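/- Let T be a theory containing HA and X a set of HA-sentences. If PA + X is EΠ_{k+1}-conservative over T + X, then PA + X is U_{k+1}-conservative over T + X. -/

import Mathlib

namespace SemiClassicalArith

/-- Terms of arithmetic: variables (de Bruijn indices) and function symbols
(one symbol of each arity for every code, covering all primitive recursive functions). -/
inductive Term : Type
  | var : ℕ → Term
  | func : (code : ℕ) → (arity : ℕ) → (Fin arity → Term) → Term

namespace Term

/-- Shift all variables `≥ d` up by one. -/
def lift (d : ℕ) : Term → Term
  | var n => if n < d then var n else var (n + 1)
  | func c a ts => func c a fun i => (ts i).lift d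

/-- Binder-removing substitution of `s` for variable `k`. -/
def subst (k : ℕ) (s : Term) : Term → Term
  | var n => if n < k then var n else if n = k then s else var (n - 1)
  | func c a ts => func c a fun i => Term.subst k s (ts i)

/-- In-place replacement of variable `k` by `s` (no shifting of other variables). -/
def repl (k : ℕ) (s : Term) : Term → Term
  | var n => if n = k then s else var n
  | func c a ts => func c a fun i => Term.repl k s (ts i)

/-- Free variables of a term. -/
def fv : Term → Finset ℕ
  | var n => {n}
  | func _ _ ts => Finset.univ.sup fun i => (ts i).fv

/-- The constant zero (function symbol of arity 0, code 0). -/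
def zero : Term := func 0 0 (fun i => i.elim0)

/-- Successor (function symbol of arity 1, code 1). -/
def succ (t : Term) : Term := func 1 1 (fun _ => t)

end Term

/-- Formulas of arithmetic in the language with an extra nullary predicate
symbol `$` (`dollar`), used as a place holder. Quantifiers use de Bruijn indices. -/
inductive Formula : Type
  | falsum : Formula
  | dollar : Formula
  | eq : Term → Term → Formula
  | and : Formula → Formula → Formula
  | or : Formula → Formula → Formula
  | imp : Formula → Formula → Formula
  | all : Formula → Formula
  | ex : Formula → Formula

namespace Formula

def neg (φ : Formula) : Formula := φ.imp falsum

def iff (φ ψ : Formula) : Formula := (φ.imp ψ).and (ψ.imp φ)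

/-- `¬_$ φ`, i.e. `φ → $`. -/
def negD (φ : Formula) : Formula := φ.imp dollar

def lift (d : ℕ) : Formula → Formula
  | falsum => falsum
  | dollar => dollar
  | eq t u => eq (t.lift d) (u.lift d)
  | and φ ψ => and (φ.lift d) (ψ.lift d)
  | or φ ψ => or (φ.lift d) (ψ.lift d)
  | imp φ ψ => imp (φ.lift d) (ψ.lift d)
  | all φ => all (φ.lift (d + 1))
  | ex φ => ex (φ.lift (d + 1))

/-- Binder-removing substitution of term `s` for variable `k`. -/
def subst (k : ℕ) (s : Term) : Formula → Formula
  | falsum => falsum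
  | dollar => dollar
  | eq t u => eq (Term.subst k s t) (Term.subst k s u)
  | and φ ψ => and (Formula.subst k s φ) (Formula.subst k s ψ)
  | or φ ψ => or (Formula.subst k s φ) (Formula.subst k s ψ)
  | imp φ ψ => imp (Formula.subst k s φ) (Formula.subst k s ψ)
  | all φ => all (Formula.subst (k + 1) (s.lift 0) φ)
  | ex φ => ex (Formula.subst (k + 1) (s.lift 0) φ)

/-- In-place replacement of variable `k` by term `s`. -/
def repl (k : ℕ) (s : Term) : Formula → Formula
  | falsum => falsum
  | dollar => dollar
  | eq t u => eq (Term.repl k s t) (Term.repl k s u)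
  | and φ ψ => and (Formula.repl k s φ) (Formula.repl k s ψ)
  | or φ ψ => or (Formula.repl k s φ) (Formula.repl k s ψ)
  | imp φ ψ => imp (Formula.repl k s φ) (Formula.repl k s ψ)
  | all φ => all (Formula.repl (k + 1) (s.lift 0) φ)
  | ex φ => ex (Formula.repl (k + 1) (s.lift 0) φ)

/-- Free variables of a formula. -/
def fv : Formula → Finset ℕ
  | falsum => ∅
  | dollar => ∅
  | eq t u => t.fv ∪ u.fv
  | and φ ψ => φ.fv ∪ ψ.fv
  | or φ ψ => φ.fv ∪ ψ.fv
  | imp φ ψ => φ.fv ∪ ψ.fv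
  | all φ => (φ.fv.erase 0).image (· - 1)
  | ex φ => (φ.fv.erase 0).image (· - 1)

/-- A sentence is a formula with no free variables. -/
def sentence (φ : Formula) : Prop := φ.fv = ∅

/-- The formula is in the language of `HA` (the placeholder `$` does not occur). -/
def noDollar : Formula → Prop
  | falsum => True
  | dollar => False
  | eq _ _ => True
  | and φ ψ => φ.noDollar ∧ ψ.noDollar
  | or φ ψ => φ.noDollar ∧ ψ.noDollar
  | imp φ ψ => φ.noDollar ∧ ψ.noDollar
  | all φ => φ.noDollar
  | ex φ => φ.noDollar

/-- Quantifier-free formula of `HA`. -/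
def isQF : Formula → Prop
  | falsum => True
  | dollar => False
  | eq _ _ => True
  | and φ ψ => φ.isQF ∧ ψ.isQF
  | or φ ψ => φ.isQF ∧ ψ.isQF
  | imp φ ψ => φ.isQF ∧ ψ.isQF
  | all _ => False
  | ex _ => False

/-- Flip `+`/`-` in an alternation path (`true` = `+`, `false` = `-`). -/
def pflip (s : List Bool) : List Bool := s.map (!·)

/-- The set of alternation paths of a formula (Akama–Berardi–Hayashi–Kohlenbach). -/
def alt : Formula → Finset (List Bool)
  | falsum => {([] : List Bool)}
  | dollar => {([] : List Bool)}
  | eq _ _ => {([] : List Bool)}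
  | and φ ψ => φ.alt ∪ ψ.alt
  | or φ ψ => φ.alt ∪ ψ.alt
  | imp φ ψ => φ.alt.image pflip ∪ ψ.alt
  | all φ => φ.alt.image (fun s => if s.head? = some false then s else false :: s)
  | ex φ => φ.alt.image (fun s => if s.head? = some true then s else true :: s)

/-- The degree of a formula: the maximal length of its alternation paths. -/
def degree (φ : Formula) : ℕ := φ.alt.sup List.length

/-- The class `U_k` (for `k ≥ 1`: degree `k` and all maximal paths begin with `-`;
`U_0` is the class of degree-`0` formulas). -/
def inU (k : ℕ) (φ : Formula) : Prop :=
  φ.degree = k ∧ ∀ s ∈ φ.alt, s.length = k → k = 0 ∨ s.head? = some false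

/-- The class `E_k` (for `k ≥ 1`: degree `k` and all maximal paths begin with `+`;
`E_0` is the class of degree-`0` formulas). -/
def inE (k : ℕ) (φ : Formula) : Prop :=
  φ.degree = k ∧ ∀ s ∈ φ.alt, s.length = k → k = 0 ∨ s.head? = some true

/-- The dual of a prenex formula: swap quantifiers and negate the matrix. -/
def dual : Formula → Formula
  | all φ => ex φ.dual
  | ex φ => all φ.dual
  | φ => φ.neg

/-- The `$`-translation (Ishihara's generalized negative translation). -/
def dollarTr : Formula → Formula
  | falsum => dollar
  | dollar => dollar
  | eq t u => (eq t u).negD.negD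
  | and φ ψ => and φ.dollarTr ψ.dollarTr
  | or φ ψ => (or φ.dollarTr ψ.dollarTr).negD.negD
  | imp φ ψ => imp φ.dollarTr ψ.dollarTr
  | all φ => all φ.dollarTr
  | ex φ => (ex φ.dollarTr).negD.negD

/-- The Friedman A-translation: replace every prime formula `P` (including `⊥`)
by `P ∨ *` (here `*` is the placeholder `dollar`). -/
def aTr : Formula → Formula
  | falsum => or falsum dollar
  | dollar => dollar
  | eq t u => or (eq t u) dollar
  | and φ ψ => and φ.aTr ψ.aTr
  | or φ ψ => or φ.aTr ψ.aTr
  | imp φ ψ => imp φ.aTr ψ.aTr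
  | all φ => all φ.aTr
  | ex φ => ex φ.aTr

/-- Prefix `n` universal quantifiers. -/
def allN : Formula → ℕ → Formula
  | φ, 0 => φ
  | φ, n + 1 => Formula.allN φ.all n

/-- The universal closure of a formula. -/
def univClosure (φ : Formula) : Formula := φ.allN (φ.fv.sup Nat.succ)

end Formula

mutual
  /-- The class `Σ_k` of prenex formulas. -/
  inductive IsSigma : ℕ → Formula → Prop
    | qf {φ : Formula} : φ.isQF → IsSigma 0 φ
    | ofPi {k : ℕ} {φ : Formula} : IsPi k φ → IsSigma (k + 1) φ
    | ex {k : ℕ} {φ : Formula} : IsSigma (k + 1) φ → IsSigma (k + 1) φ.ex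
  /-- The class `Π_k` of prenex formulas. -/
  inductive IsPi : ℕ → Formula → Prop
    | qf {φ : Formula} : φ.isQF → IsPi 0 φ
    | ofSigma {k : ℕ} {φ : Formula} : IsSigma k φ → IsPi (k + 1) φ
    | all {k : ℕ} {φ : Formula} : IsPi (k + 1) φ → IsPi (k + 1) φ.all
end

/-- Axioms of Heyting arithmetic `HA` (Hilbert style intuitionistic predicate logic
with equality, plus arithmetical axioms and the induction scheme). -/
inductive HAAx : Formula → Prop
  | axK (φ ψ : Formula) : HAAx (φ.imp (ψ.imp φ))
  | axS (φ ψ χ : Formula) : HAAx ((φ.imp (ψ.imp χ)).imp ((φ.imp ψ).imp (φ.imp χ)))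
  | andI (φ ψ : Formula) : HAAx (φ.imp (ψ.imp (φ.and ψ)))
  | andE1 (φ ψ : Formula) : HAAx ((φ.and ψ).imp φ)
  | andE2 (φ ψ : Formula) : HAAx ((φ.and ψ).imp ψ)
  | orI1 (φ ψ : Formula) : HAAx (φ.imp (φ.or ψ))
  | orI2 (φ ψ : Formula) : HAAx (ψ.imp (φ.or ψ))
  | orE (φ ψ χ : Formula) : HAAx ((φ.imp χ).imp ((ψ.imp χ).imp ((φ.or ψ).imp χ)))
  | efq (φ : Formula) : HAAx (Formula.falsum.imp φ)
  | allE (φ : Formula) (t : Term) : HAAx (φ.all.imp (φ.subst 0 t))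
  | exI (φ : Formula) (t : Term) : HAAx ((φ.subst 0 t).imp φ.ex)
  | allK (φ ψ : Formula) : HAAx ((φ.imp ψ).all.imp (φ.all.imp ψ.all))
  | allVac (φ : Formula) : HAAx (φ.imp (φ.lift 0).all)
  | exE (φ ψ : Formula) : HAAx ((φ.imp (ψ.lift 0)).all.imp (φ.ex.imp ψ))
  | eqRefl (t : Term) : HAAx (Formula.eq t t)
  | eqSubst (t u : Term) (φ : Formula) : HAAx ((Formula.eq t u).imp ((φ.subst 0 t).imp (φ.subst 0 u)))
  | succNeZero (t : Term) : HAAx (Formula.neg (Formula.eq (Term.succ t) Term.zero))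
  | succInj (t u : Term) : HAAx ((Formula.eq (Term.succ t) (Term.succ u)).imp (Formula.eq t u))
  | ind (φ : Formula) : HAAx ((φ.subst 0 Term.zero).imp
      ((((φ.imp (φ.repl 0 (Term.succ (Term.var 0))))).all).imp φ.all))
  | atomDec (t u : Term) : HAAx ((Formula.eq t u).or (Formula.eq t u).neg)

/-- Provability from `HA` (in the language possibly containing `$`)
together with the extra axioms `T`. -/
inductive Proves (T : Set Formula) : Formula → Prop
  | ax {φ : Formula} : φ ∈ T → Proves T φ
  | ha {φ : Formula} : HAAx φ → Proves T φ
  | mp {φ ψ : Formula} : Proves T (φ.imp ψ) → Proves T φ → Proves T ψ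
  | gen {φ : Formula} : Proves T φ → Proves T φ.all

/-- The scheme `Σ_k-LEM`. -/
def sigLEM (k : ℕ) : Set Formula := {ψ | ∃ φ : Formula, IsSigma k φ ∧ ψ = φ.or φ.neg}

/-- The full law of excluded middle for `HA`-formulas; `Proves lemSet` is `PA`-provability. -/
def lemSet : Set Formula := {ψ | ∃ φ : Formula, φ.noDollar ∧ ψ = φ.or φ.neg}

/-- The scheme `F_k-LEM`: excluded middle for `HA`-formulas of degree at most `k`. -/
def fLEM (k : ℕ) : Set Formula :=
  {ψ | ∃ φ : Formula, φ.noDollar ∧ φ.degree ≤ k ∧ ψ = φ.or φ.neg}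

/-- `T` is (the set of extra axioms of) a semi-classical arithmetic:
`HA ⊆ HA + T ⊆ PA`, i.e. all axioms are `HA`-formulas provable in `PA`. -/
def IsSemiClassical (T : Set Formula) : Prop :=
  ∀ φ ∈ T, φ.noDollar ∧ Proves lemSet φ

mutual
  /-- The class `ℛ_{k+1}` (index `k` denotes `ℛ_{k+1}`). -/
  inductive Rcl : ℕ → Formula → Prop
    | base {k : ℕ} {φ : Formula} : φ.degree ≤ k → φ.noDollar → Rcl k φ
    | and {k : ℕ} {φ ψ : Formula} : Rcl k φ → Rcl k ψ → Rcl k (φ.and ψ)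
    | or {k : ℕ} {φ ψ : Formula} : Rcl k φ → Rcl k ψ → Rcl k (φ.or ψ)
    | all {k : ℕ} {φ : Formula} : Rcl k φ → Rcl k φ.all
    | imp {k : ℕ} {φ ψ : Formula} : Jcl k φ → Rcl k ψ → Rcl k (φ.imp ψ)
  /-- The class `𝒥_{k+1}` (index `k` denotes `𝒥_{k+1}`). -/
  inductive Jcl : ℕ → Formula → Prop
    | base {k : ℕ} {φ : Formula} : φ.degree ≤ k → φ.noDollar → Jcl k φ
    | and {k : ℕ} {φ ψ : Formula} : Jcl k φ → Jcl k ψ → Jcl k (φ.and ψ)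
    | or {k : ℕ} {φ ψ : Formula} : Jcl k φ → Jcl k ψ → Jcl k (φ.or ψ)
    | ex {k : ℕ} {φ : Formula} : Jcl k φ → Jcl k φ.ex
    | imp {k : ℕ} {φ ψ : Formula} : Rcl k φ → Jcl k ψ → Jcl k (φ.imp ψ)
end

/-- The class `𝒬_{k+1}` (index `k` denotes `𝒬_{k+1}`): generated from prime formulas by
`∧, ∨, ∀, ∃` and implications `J → Q` with `J ∈ 𝒥_{k+1}`. -/
inductive Qcl : ℕ → Formula → Prop
  | falsum {k : ℕ} : Qcl k Formula.falsum
  | eq {k : ℕ} {t u : Term} : Qcl k (Formula.eq t u)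
  | and {k : ℕ} {φ ψ : Formula} : Qcl k φ → Qcl k ψ → Qcl k (φ.and ψ)
  | or {k : ℕ} {φ ψ : Formula} : Qcl k φ → Qcl k ψ → Qcl k (φ.or ψ)
  | all {k : ℕ} {φ : Formula} : Qcl k φ → Qcl k φ.all
  | ex {k : ℕ} {φ : Formula} : Qcl k φ → Qcl k φ.ex
  | imp {k : ℕ} {φ ψ : Formula} : Jcl k φ → Qcl k ψ → Qcl k (φ.imp ψ)

/-- The class `𝒱_{k+1}` (index `k` denotes `𝒱_{k+1}`): generated from `𝒥_{k+1}` by `∧, ∀`. -/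
inductive Vcl : ℕ → Formula → Prop
  | ofJ {k : ℕ} {φ : Formula} : Jcl k φ → Vcl k φ
  | and {k : ℕ} {φ ψ : Formula} : Vcl k φ → Vcl k ψ → Vcl k (φ.and ψ)
  | all {k : ℕ} {φ : Formula} : Vcl k φ → Vcl k φ.all

/-- The class `EΠ_k`: generated from `Π_k` formulas by `∨` and `∀`. -/
inductive EPi (k : ℕ) : Formula → Prop
  | ofPi {φ : Formula} : IsPi k φ → EPi k φ
  | or {φ ψ : Formula} : EPi k φ → EPi k ψ → EPi k (φ.or ψ)
  | all {φ : Formula} : EPi k φ → EPi k φ.all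

/-- The class `EΣ_{k+1}` (index `k` denotes `EΣ_{k+1}`): existential quantifications
of `EΠ_k` formulas. -/
inductive ESig (k : ℕ) : Formula → Prop
  | ofEPi {φ : Formula} : EPi k φ → ESig k φ
  | ex {φ : Formula} : ESig k φ → ESig k φ.ex

/-- The scheme `Γ-DNEC`: universal closure of `¬¬φ` implies universal closure of `φ`. -/
def dnecSet (Γ : Set Formula) : Set Formula :=
  {ψ | ∃ φ ∈ Γ, ψ = (φ.neg.neg.univClosure).imp φ.univClosure}

/-- The scheme `Γ-DNSC`: universal closure of `¬¬φ` implies `¬¬` of the universal closure. -/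
def dnscSet (Γ : Set Formula) : Set Formula :=
  {ψ | ∃ φ ∈ Γ, ψ = (φ.neg.neg.univClosure).imp φ.univClosure.neg.neg}

/-- Double-negation elimination for sentences in `Γ`. -/
def dneSentSet (Γ : Set Formula) : Set Formula :=
  {ψ | ∃ φ ∈ Γ, φ.sentence ∧ ψ = φ.neg.neg.imp φ}



/-!
By the prenex normal form theorem of Akama–Berardi–Hayashi–Kohlenbach, over `HA + Σ_m-LEM` an
`HA`-formula of degree at most `m` all of whose paths of length `m` begin with `+` (resp. `-`) is
equivalent to a `Σ_m` (resp. `Π_m`) formula; prenexing pulls quantifiers out one at a time and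
uses excluded middle only for prenex formulas of level `m`.

Using it, induction on `φ ∈ U_{k+1}` gives `φ' ∈ EΠ_{k+1}` with `HA + Σ_k-LEM ⊢ φ' → φ` and
`PA ⊢ φ → φ'`, simultaneously with the same for `¬φ` when `φ ∈ E_{k+1}`: `∧`, `∨`, `∀` are
handled by closure properties of `EΠ_{k+1}`, `A → B` by `¬A ∨ B`, and a quantifier of the other
sign by a prenex form of level `k`, whose negation is its dual.

If `PA + X ⊢ φ` then `PA + X ⊢ φ'`, so `T + X ⊢ φ'` by conservativity. For `ψ ∈ Σ_k` the
formula `ψ ∨ ψᵈ` lies in `EΠ_{k+1}` and is provable in `PA`, so conservativity also gives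
`T + X ⊢ Σ_k-LEM`, and hence `T + X ⊢ φ`.
-/

namespace Term

theorem subst_lift : ∀ (u : Term) (k : ℕ) (t : Term), Term.subst k t (u.lift k) = u
  | var n, k, t => by
    by_cases h : n < k
    · simp [lift, subst, h]
    · simp [lift, subst, h, show ¬n + 1 < k by omega, show n + 1 ≠ k by omega]
  | func c a ts, k, t => by
    simp only [lift, subst]
    exact congrArg _ (funext fun i => subst_lift (ts i) k t)

theorem subst_var_lift_succ : ∀ (u : Term) (k : ℕ), Term.subst k (var k) (u.lift (k + 1)) = u
  | var n, k => by
    rcases lt_trichotomy n k with h | rfl | h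
    · simp [lift, subst, h, show n < k + 1 by omega]
    · simp [lift, subst]
    · simp [lift, subst, show ¬n < k + 1 by omega, show ¬n + 1 < k by omega,
        show n + 1 ≠ k by omega]
  | func c a ts, k => by
    simp only [lift, subst]
    exact congrArg _ (funext fun i => subst_var_lift_succ (ts i) k)

end Term

namespace Formula

theorem subst_lift : ∀ (φ : Formula) (k : ℕ) (t : Term), (φ.lift k).subst k t = φ := by
  intro φ
  induction φ <;> intro k t <;> simp [lift, subst, Term.subst_lift, *]

theorem subst_var_lift_succ :
    ∀ (φ : Formula) (k : ℕ), (φ.lift (k + 1)).subst k (Term.var k) = φ := by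
  intro φ
  induction φ <;> intro k <;> simp [lift, subst, Term.subst_var_lift_succ, Term.lift, *]

def size : Formula → ℕ
  | falsum | dollar | eq _ _ => 1
  | and φ ψ | or φ ψ | imp φ ψ => φ.size + ψ.size + 1
  | all φ | ex φ => φ.size + 1

theorem size_lift : ∀ (φ : Formula) (d : ℕ), (φ.lift d).size = φ.size := by
  intro φ
  induction φ <;> intro d <;> simp [lift, size, *]

theorem isQF_lift : ∀ {φ : Formula} (d : ℕ), φ.isQF → (φ.lift d).isQF
  | falsum, _, _ | eq _ _, _, _ => trivial
  | and _ _, d, h | or _ _, d, h | imp _ _, d, h => ⟨isQF_lift d h.1, isQF_lift d h.2⟩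

theorem noDollar_of_isQF : ∀ {φ : Formula}, φ.isQF → φ.noDollar
  | falsum, _ | eq _ _, _ => trivial
  | and _ _, h | or _ _, h | imp _ _, h => ⟨noDollar_of_isQF h.1, noDollar_of_isQF h.2⟩

theorem dual_of_isQF : ∀ {φ : Formula}, φ.isQF → φ.dual = φ.neg
  | falsum, _ | eq _ _, _ | and _ _, _ | or _ _, _ | imp _ _, _ => rfl

/-- The quantifier of sign `b`: `∃` for `true` (`+`) and `∀` for `false` (`-`). -/
def quant : Bool → Formula → Formula
  | true => ex
  | false => all

theorem size_quant (b : Bool) (φ : Formula) : (φ.quant b).size = φ.size + 1 := by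
  cases b <;> rfl

end Formula

/-! ### The classes `Σ_m` and `Π_m` -/

mutual

theorem IsSigma.succ : ∀ {m : ℕ} {φ : Formula}, IsSigma m φ → IsSigma (m + 1) φ
  | _, _, .qf h => .ofPi (.qf h)
  | _, _, .ofPi h => .ofPi h.succ
  | _, _, .ex h => .ex h.succ

theorem IsPi.succ : ∀ {m : ℕ} {φ : Formula}, IsPi m φ → IsPi (m + 1) φ
  | _, _, .qf h => .ofSigma (.qf h)
  | _, _, .ofSigma h => .ofSigma h.succ
  | _, _, .all h => .all h.succ

end

mutual

theorem IsSigma.lift : ∀ {m : ℕ} {φ : Formula}, IsSigma m φ → ∀ d, IsSigma m (φ.lift d)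
  | _, _, .qf h, d => .qf (Formula.isQF_lift d h)
  | _, _, .ofPi h, d => .ofPi (h.lift d)
  | _, _, .ex h, d => .ex (h.lift (d + 1))

theorem IsPi.lift : ∀ {m : ℕ} {φ : Formula}, IsPi m φ → ∀ d, IsPi m (φ.lift d)
  | _, _, .qf h, d => .qf (Formula.isQF_lift d h)
  | _, _, .ofSigma h, d => .ofSigma (h.lift d)
  | _, _, .all h, d => .all (h.lift (d + 1))

end

mutual

theorem IsSigma.noDollar : ∀ {m : ℕ} {φ : Formula}, IsSigma m φ → φ.noDollar
  | _, _, .qf h => Formula.noDollar_of_isQF h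
  | _, _, .ofPi h => h.noDollar
  | _, _, .ex h => h.noDollar

theorem IsPi.noDollar : ∀ {m : ℕ} {φ : Formula}, IsPi m φ → φ.noDollar
  | _, _, .qf h => Formula.noDollar_of_isQF h
  | _, _, .ofSigma h => h.noDollar
  | _, _, .all h => h.noDollar

end

mutual

theorem IsSigma.dual : ∀ {m : ℕ} {φ : Formula}, IsSigma m φ → IsPi m φ.dual
  | _, _, .qf h => .qf (by rw [Formula.dual_of_isQF h]; exact ⟨h, trivial⟩)
  | _, _, .ofPi h => .ofSigma h.dual
  | _, _, .ex h => .all h.dual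

theorem IsPi.dual : ∀ {m : ℕ} {φ : Formula}, IsPi m φ → IsSigma m φ.dual
  | _, _, .qf h => .qf (by rw [Formula.dual_of_isQF h]; exact ⟨h, trivial⟩)
  | _, _, .ofSigma h => .ofPi h.dual
  | _, _, .all h => .ex h.dual

end

/-- `Σ_m` for `b = true` and `Π_m` for `b = false`, matching the signs of `Formula.quant`. -/
def IsPrenex : Bool → ℕ → Formula → Prop
  | true => IsSigma
  | false => IsPi

namespace IsPrenex

variable {b : Bool} {m : ℕ} {φ : Formula}

theorem of_isQF (h : φ.isQF) : IsPrenex b m φ := by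
  induction m generalizing b with
  | zero => cases b; exacts [.qf h, .qf h]
  | succ m ih => cases b; exacts [.ofSigma (ih (b := true)), .ofPi (ih (b := false))]

theorem isQF (h : IsPrenex b 0 φ) : φ.isQF := by
  cases b <;> cases h <;> assumption

theorem succ_of_not (h : IsPrenex (!b) m φ) : IsPrenex b (m + 1) φ := by
  cases b; exacts [.ofSigma h, .ofPi h]

theorem quant (h : IsPrenex b (m + 1) φ) : IsPrenex b (m + 1) (φ.quant b) := by
  cases b; exacts [.all h, .ex h]

theorem succ_cases (h : IsPrenex b (m + 1) φ) :
    IsPrenex (!b) m φ ∨ ∃ ψ, φ = ψ.quant b ∧ IsPrenex b (m + 1) ψ := by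
  cases b <;> cases h
  all_goals first | exact .inl ‹_› | exact .inr ⟨_, rfl, ‹_›⟩

theorem lift (h : IsPrenex b m φ) (d : ℕ) : IsPrenex b m (φ.lift d) := by
  cases b; exacts [IsPi.lift h d, IsSigma.lift h d]

theorem dual (h : IsPrenex b m φ) : IsPrenex (!b) m φ.dual := by
  cases b; exacts [IsPi.dual h, IsSigma.dual h]

end IsPrenex

theorem sigLEM_mono : Monotone sigLEM :=
  monotone_nat_of_le_succ fun _ _ ⟨φ, hφ, hψ⟩ => ⟨φ, hφ.succ, hψ⟩

theorem sigLEM_subset_lemSet (m : ℕ) : sigLEM m ⊆ lemSet :=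
  fun _ ⟨φ, hφ, hψ⟩ => ⟨φ, hφ.noDollar, hψ⟩

/-! ### Hilbert-style derivations -/

namespace Proves

variable {Γ Γ' : Set Formula} {φ ψ χ δ A B C : Formula}

theorem transfer (h : Proves Γ φ) (hΓ : ∀ ψ ∈ Γ, Proves Γ' ψ) : Proves Γ' φ := by
  induction h with
  | ax hφ => exact hΓ _ hφ
  | ha hφ => exact ha hφ
  | mp _ _ ih₁ ih₂ => exact ih₁.mp ih₂
  | gen _ ih => exact ih.gen

theorem mono (h : Proves Γ φ) (hΓ : Γ ⊆ Γ') : Proves Γ' φ :=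
  h.transfer fun _ hψ => ax (hΓ hψ)

theorem imp_const : Proves Γ (φ.imp (ψ.imp φ)) := ha (.axK φ ψ)

theorem imp_of (h : Proves Γ ψ) : Proves Γ (φ.imp ψ) := imp_const.mp h

theorem imp_mp (h : Proves Γ (φ.imp (ψ.imp χ))) (h' : Proves Γ (φ.imp ψ)) :
    Proves Γ (φ.imp χ) :=
  ((ha (.axS φ ψ χ)).mp h).mp h'

theorem imp_self : Proves Γ (φ.imp φ) := imp_mp imp_const (imp_const (ψ := φ))

theorem imp_trans (h : Proves Γ (φ.imp ψ)) (h' : Proves Γ (ψ.imp χ)) : Proves Γ (φ.imp χ) :=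
  imp_mp (imp_of h') h

theorem imp_swap (h : Proves Γ (φ.imp (ψ.imp χ))) : Proves Γ (ψ.imp (φ.imp χ)) :=
  imp_trans imp_const ((ha (.axS φ ψ χ)).mp h)

theorem imp_imp_imp_right (h : Proves Γ (ψ.imp χ)) : Proves Γ ((φ.imp ψ).imp (φ.imp χ)) :=
  (ha (.axS φ ψ χ)).mp (imp_of h)

theorem imp_imp_imp_left (h : Proves Γ (φ.imp ψ)) : Proves Γ ((ψ.imp χ).imp (φ.imp χ)) :=
  imp_trans imp_const ((imp_swap (ha (.axS φ ψ χ))).mp h)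

theorem imp_imp_imp (h : Proves Γ (χ.imp φ)) (h' : Proves Γ (ψ.imp δ)) :
    Proves Γ ((φ.imp ψ).imp (χ.imp δ)) :=
  imp_trans (imp_imp_imp_left h) (imp_imp_imp_right h')

theorem and_left : Proves Γ ((φ.and ψ).imp φ) := ha (.andE1 φ ψ)

theorem and_right : Proves Γ ((φ.and ψ).imp ψ) := ha (.andE2 φ ψ)

theorem or_inl : Proves Γ (φ.imp (φ.or ψ)) := ha (.orI1 φ ψ)

theorem or_inr : Proves Γ (ψ.imp (φ.or ψ)) := ha (.orI2 φ ψ)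

theorem falsum_imp : Proves Γ (Formula.falsum.imp φ) := ha (.efq φ)

theorem curry (h : Proves Γ ((φ.and ψ).imp χ)) : Proves Γ (φ.imp (ψ.imp χ)) :=
  imp_trans (ha (.andI φ ψ)) (imp_imp_imp_right h)

theorem uncurry (h : Proves Γ (φ.imp (ψ.imp χ))) : Proves Γ ((φ.and ψ).imp χ) :=
  imp_mp (imp_trans and_left h) and_right

theorem imp_and (h : Proves Γ (χ.imp φ)) (h' : Proves Γ (χ.imp ψ)) :
    Proves Γ (χ.imp (φ.and ψ)) :=
  imp_mp (imp_trans h (ha (.andI φ ψ))) h'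

theorem and_imp_and (h : Proves Γ (φ.imp χ)) (h' : Proves Γ (ψ.imp δ)) :
    Proves Γ ((φ.and ψ).imp (χ.and δ)) :=
  imp_and (imp_trans and_left h) (imp_trans and_right h')

theorem or_imp (h : Proves Γ (φ.imp χ)) (h' : Proves Γ (ψ.imp χ)) :
    Proves Γ ((φ.or ψ).imp χ) :=
  ((ha (.orE φ ψ χ)).mp h).mp h'

theorem or_imp_or (h : Proves Γ (φ.imp χ)) (h' : Proves Γ (ψ.imp δ)) :
    Proves Γ ((φ.or ψ).imp (χ.or δ)) :=
  or_imp (imp_trans h or_inl) (imp_trans h' or_inr)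

theorem neg_imp_imp : Proves Γ (φ.neg.imp (φ.imp ψ)) := imp_imp_imp_right falsum_imp

theorem mt (h : Proves Γ (φ.imp ψ)) : Proves Γ (ψ.neg.imp φ.neg) := imp_imp_imp_left h

theorem resolve_left (h : Proves Γ (φ.or ψ)) : Proves Γ (φ.neg.imp ψ) :=
  (or_imp (imp_swap neg_imp_imp) imp_const).mp h

theorem resolve_right (h : Proves Γ (φ.or ψ)) : Proves Γ (ψ.neg.imp φ) :=
  (or_imp imp_const (imp_swap neg_imp_imp)).mp h

theorem imp_of_em (hem : Proves Γ (φ.or φ.neg)) (h : Proves Γ (φ.imp ψ))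
    (h' : Proves Γ (φ.neg.imp ψ)) : Proves Γ ψ :=
  (or_imp h h').mp hem

theorem iff_intro (h : Proves Γ (φ.imp ψ)) (h' : Proves Γ (ψ.imp φ)) : Proves Γ (φ.iff ψ) :=
  ((ha (.andI _ _)).mp h).mp h'

theorem iff_mp (h : Proves Γ (φ.iff ψ)) : Proves Γ (φ.imp ψ) := and_left.mp h

theorem iff_mpr (h : Proves Γ (φ.iff ψ)) : Proves Γ (ψ.imp φ) := and_right.mp h

theorem iff_refl : Proves Γ (φ.iff φ) := iff_intro imp_self imp_self

theorem iff_trans (h : Proves Γ (φ.iff ψ)) (h' : Proves Γ (ψ.iff χ)) : Proves Γ (φ.iff χ) :=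
  iff_intro (imp_trans h.iff_mp h'.iff_mp) (imp_trans h'.iff_mpr h.iff_mpr)

theorem and_congr (h : Proves Γ (φ.iff χ)) (h' : Proves Γ (ψ.iff δ)) :
    Proves Γ ((φ.and ψ).iff (χ.and δ)) :=
  iff_intro (and_imp_and h.iff_mp h'.iff_mp) (and_imp_and h.iff_mpr h'.iff_mpr)

theorem or_congr (h : Proves Γ (φ.iff χ)) (h' : Proves Γ (ψ.iff δ)) :
    Proves Γ ((φ.or ψ).iff (χ.or δ)) :=
  iff_intro (or_imp_or h.iff_mp h'.iff_mp) (or_imp_or h.iff_mpr h'.iff_mpr)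

theorem imp_congr (h : Proves Γ (φ.iff χ)) (h' : Proves Γ (ψ.iff δ)) :
    Proves Γ ((φ.imp ψ).iff (χ.imp δ)) :=
  iff_intro (imp_imp_imp h.iff_mpr h'.iff_mp) (imp_imp_imp h.iff_mp h'.iff_mpr)

theorem neg_congr (h : Proves Γ (φ.iff ψ)) : Proves Γ (φ.neg.iff ψ.neg) :=
  imp_congr h iff_refl

theorem imp_comp : Proves Γ ((φ.imp ψ).imp ((ψ.imp χ).imp (φ.imp χ))) :=
  imp_swap (imp_trans imp_const (ha (.axS φ ψ χ)))

theorem and_comm : Proves Γ ((φ.and ψ).iff (ψ.and φ)) :=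
  iff_intro (imp_and and_right and_left) (imp_and and_right and_left)

theorem or_comm : Proves Γ ((φ.or ψ).iff (ψ.or φ)) :=
  iff_intro (or_imp or_inr or_inl) (or_imp or_inr or_inl)

theorem or_and_neg_imp : Proves Γ (((φ.or ψ).and ψ.neg).imp φ) :=
  uncurry (or_imp imp_const (imp_swap neg_imp_imp))

theorem and_or_iff : Proves Γ ((A.and (B.or C)).iff ((A.and B).or (A.and C))) :=
  iff_intro (uncurry (imp_swap (or_imp (imp_swap (curry or_inl)) (imp_swap (curry or_inr)))))
    (or_imp (and_imp_and imp_self or_inl) (and_imp_and imp_self or_inr))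

theorem or_and_iff : Proves Γ (((B.or C).and A).iff ((B.and A).or (C.and A))) :=
  and_comm.iff_trans (and_or_iff.iff_trans (or_congr and_comm and_comm))

theorem all_imp_all (h : Proves Γ (φ.imp ψ)) : Proves Γ (φ.all.imp ψ.all) :=
  (ha (.allK φ ψ)).mp h.gen

theorem imp_all (h : Proves Γ ((χ.lift 0).imp φ)) : Proves Γ (χ.imp φ.all) :=
  imp_trans (ha (.allVac χ)) (all_imp_all h)

theorem ex_imp (h : Proves Γ (φ.imp (ψ.lift 0))) : Proves Γ (φ.ex.imp ψ) :=
  (ha (.exE φ ψ)).mp h.gen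

theorem all_lift_imp : Proves Γ ((φ.lift 1).all.imp φ) := by
  simpa only [Formula.subst_var_lift_succ] using ha (T := Γ) (.allE (φ.lift (0 + 1)) (.var 0))

theorem imp_ex_lift : Proves Γ (φ.imp (φ.lift 1).ex) := by
  simpa only [Formula.subst_var_lift_succ] using ha (T := Γ) (.exI (φ.lift (0 + 1)) (.var 0))

theorem all_lift_zero_imp : Proves Γ ((φ.lift 0).all.imp φ) := by
  simpa only [Formula.subst_lift] using ha (T := Γ) (.allE (φ.lift 0) .zero)

theorem imp_ex_lift_zero : Proves Γ (φ.imp (φ.lift 0).ex) := by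
  simpa only [Formula.subst_lift] using ha (T := Γ) (.exI (φ.lift 0) .zero)

theorem ex_imp_ex (h : Proves Γ (φ.imp ψ)) : Proves Γ (φ.ex.imp ψ.ex) :=
  ex_imp (imp_trans h imp_ex_lift)

theorem all_congr (h : Proves Γ (φ.iff ψ)) : Proves Γ (φ.all.iff ψ.all) :=
  iff_intro (all_imp_all h.iff_mp) (all_imp_all h.iff_mpr)

theorem ex_congr (h : Proves Γ (φ.iff ψ)) : Proves Γ (φ.ex.iff ψ.ex) :=
  iff_intro (ex_imp_ex h.iff_mp) (ex_imp_ex h.iff_mpr)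

theorem quant_congr (b : Bool) (h : Proves Γ (φ.iff ψ)) :
    Proves Γ ((φ.quant b).iff (ψ.quant b)) := by
  cases b; exacts [all_congr h, ex_congr h]

theorem neg_ex_iff : Proves Γ (A.ex.neg.iff A.neg.all) :=
  iff_intro (imp_all (mt imp_ex_lift)) (ha (.exE A .falsum))

theorem ex_neg_imp_neg_all : Proves Γ (A.neg.ex.imp A.all.neg) :=
  ex_imp (mt all_lift_imp)

theorem dual_imp_neg : ∀ {φ : Formula}, Proves Γ (φ.dual.imp φ.neg)
  | .all _ => imp_trans (ex_imp_ex dual_imp_neg) ex_neg_imp_neg_all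
  | .ex _ => imp_trans (all_imp_all dual_imp_neg) neg_ex_iff.iff_mpr
  | .falsum | .dollar | .eq _ _ | .and _ _ | .or _ _ | .imp _ _ => imp_self

theorem all_and_iff : Proves Γ ((A.all.and B).iff (A.and (B.lift 0)).all) :=
  iff_intro (imp_all (and_imp_and all_lift_imp imp_self))
    (imp_and (all_imp_all and_left) (imp_trans (all_imp_all and_right) all_lift_zero_imp))

theorem and_all_iff : Proves Γ ((A.and B.all).iff ((A.lift 0).and B).all) :=
  and_comm.iff_trans (all_and_iff.iff_trans (all_congr and_comm))

theorem ex_and_iff : Proves Γ ((A.ex.and B).iff (A.and (B.lift 0)).ex) :=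
  iff_intro (uncurry (ex_imp (curry imp_ex_lift)))
    (ex_imp (imp_and (imp_trans and_left imp_ex_lift) and_right))

theorem and_ex_iff : Proves Γ ((A.and B.ex).iff ((A.lift 0).and B).ex) :=
  and_comm.iff_trans (ex_and_iff.iff_trans (ex_congr and_comm))

theorem ex_or_iff : Proves Γ ((A.ex.or B).iff (A.or (B.lift 0)).ex) :=
  iff_intro (or_imp (ex_imp_ex or_inl) (imp_trans imp_ex_lift_zero (ex_imp_ex or_inr)))
    (ex_imp (or_imp_or imp_ex_lift imp_self))

theorem or_ex_iff : Proves Γ ((A.or B.ex).iff ((A.lift 0).or B).ex) :=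
  or_comm.iff_trans (ex_or_iff.iff_trans (ex_congr or_comm))

theorem all_or_iff (hB : Proves Γ (B.or B.neg)) :
    Proves Γ ((A.all.or B).iff (A.or (B.lift 0)).all) := by
  have hA : Proves Γ (((A.or (B.lift 0)).all.and B.neg).imp A.all) :=
    imp_all (imp_trans (and_imp_and all_lift_imp imp_self) or_and_neg_imp)
  refine iff_intro (imp_all (or_imp_or all_lift_imp imp_self)) (imp_of_em hB ?_ ?_)
  · exact imp_trans or_inr imp_const
  · exact imp_swap (curry (imp_trans hA or_inl))

theorem or_all_iff (hA : Proves Γ (A.or A.neg)) :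
    Proves Γ ((A.or B.all).iff ((A.lift 0).or B).all) :=
  or_comm.iff_trans ((all_or_iff hA).iff_trans (all_congr or_comm))

theorem ex_imp_iff : Proves Γ ((A.ex.imp B).iff (A.imp (B.lift 0)).all) :=
  iff_intro (imp_all (imp_imp_imp_left imp_ex_lift))
    (imp_swap (ex_imp (imp_swap all_lift_imp)))

theorem imp_all_iff : Proves Γ ((A.imp B.all).iff ((A.lift 0).imp B).all) :=
  iff_intro (imp_all (imp_imp_imp_right all_lift_imp))
    (curry (imp_all (imp_mp (imp_trans and_left all_lift_imp) and_right)))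

theorem all_imp_iff (h : Proves Γ (A.all.or A.neg.ex)) :
    Proves Γ ((A.all.imp B).iff (A.imp (B.lift 0)).ex) := by
  have hB : Proves Γ (B.imp (A.imp (B.lift 0)).ex) :=
    imp_trans imp_ex_lift_zero (ex_imp_ex imp_const)
  refine iff_intro ((or_imp ?_ ?_).mp h) (ex_imp (imp_imp_imp_left all_lift_imp))
  · exact imp_trans (imp_swap imp_self) (imp_imp_imp_right hB)
  · exact imp_trans (ex_imp_ex neg_imp_imp) imp_const

theorem imp_ex_iff (h : Proves Γ (B.ex.or B.ex.neg)) :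
    Proves Γ ((A.imp B.ex).iff ((A.lift 0).imp B).ex) := by
  have hA : Proves Γ (A.neg.imp ((A.lift 0).imp B).ex) :=
    imp_trans imp_ex_lift_zero (ex_imp_ex neg_imp_imp)
  refine iff_intro ((or_imp ?_ ?_).mp h) (ex_imp (imp_imp_imp_right imp_ex_lift))
  · exact imp_trans (ex_imp_ex imp_const) imp_const
  · exact imp_swap (imp_trans imp_comp (imp_imp_imp_right hA))

theorem neg_or_iff : Proves Γ ((φ.or ψ).neg.iff (φ.neg.and ψ.neg)) :=
  iff_intro (imp_and (mt or_inl) (mt or_inr))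
    (imp_swap (or_imp (imp_swap and_left) (imp_swap and_right)))

theorem and_neg_imp_neg_imp : Proves Γ ((φ.and ψ.neg).imp (φ.imp ψ).neg) :=
  imp_mp (imp_trans (imp_trans and_right (imp_swap imp_comp)) (ha (.axS _ φ _)))
    (imp_trans and_left imp_const)

theorem em_and (hφ : Proves Γ (φ.or φ.neg)) (hψ : Proves Γ (ψ.or ψ.neg)) :
    Proves Γ ((φ.and ψ).or (φ.and ψ).neg) :=
  imp_of_em hφ
    (imp_of_em hψ (imp_swap (curry or_inl))
      (imp_trans (imp_trans (mt and_right) or_inr) imp_const))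
    (imp_trans (mt and_left) or_inr)

theorem em_or (hφ : Proves Γ (φ.or φ.neg)) (hψ : Proves Γ (ψ.or ψ.neg)) :
    Proves Γ ((φ.or ψ).or (φ.or ψ).neg) :=
  imp_of_em hφ (imp_trans or_inl or_inl)
    (imp_of_em hψ (imp_trans (imp_trans or_inr or_inl) imp_const)
      (imp_swap (curry (imp_trans neg_or_iff.iff_mpr or_inr))))

theorem em_imp (hφ : Proves Γ (φ.or φ.neg)) (hψ : Proves Γ (ψ.or ψ.neg)) :
    Proves Γ ((φ.imp ψ).or (φ.imp ψ).neg) :=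
  imp_of_em hφ
    (imp_of_em hψ (imp_trans (imp_trans imp_const or_inl) imp_const)
      (imp_swap (curry (imp_trans and_neg_imp_neg_imp or_inr))))
    (imp_trans neg_imp_imp or_inl)

theorem em_of_isQF : ∀ {φ : Formula}, φ.isQF → Proves Γ (φ.or φ.neg)
  | .falsum, _ => or_inr.mp imp_self
  | .eq t u, _ => ha (.atomDec t u)
  | .and _ _, h => em_and (em_of_isQF h.1) (em_of_isQF h.2)
  | .or _ _, h => em_or (em_of_isQF h.1) (em_of_isQF h.2)
  | .imp _ _, h => em_imp (em_of_isQF h.1) (em_of_isQF h.2)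

end Proves

/- At `∃β` (resp. `∀β`), excluded middle for the `Σ_m` formula `∃β` (resp. `∃βᵈ`) reduces the
claim to `β`. -/
open Proves in
mutual

theorem IsSigma.proves_or_dual : ∀ {m : ℕ} {φ : Formula}, IsSigma m φ →
    Proves (sigLEM m) (φ.or φ.dual)
  | _, _, .qf h => by rw [Formula.dual_of_isQF h]; exact em_of_isQF h
  | _, _, .ofPi h => h.proves_or_dual.mono (sigLEM_mono (Nat.le_succ _))
  | _, _, .ex h => imp_of_em (ax ⟨_, .ex h, rfl⟩) or_inl
      (imp_trans neg_ex_iff.iff_mp (imp_trans (all_imp_all h.proves_or_dual.resolve_left) or_inr))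

theorem IsPi.proves_or_dual : ∀ {m : ℕ} {φ : Formula}, IsPi m φ →
    Proves (sigLEM m) (φ.or φ.dual)
  | _, _, .qf h => by rw [Formula.dual_of_isQF h]; exact em_of_isQF h
  | _, _, .ofSigma h => h.proves_or_dual.mono (sigLEM_mono (Nat.le_succ _))
  | _, _, .all h => imp_of_em (ax ⟨_, .ex h.dual, rfl⟩) or_inr
      (imp_trans neg_ex_iff.iff_mp (imp_trans (all_imp_all h.proves_or_dual.resolve_right) or_inl))

end

namespace IsPrenex

variable {b : Bool} {m : ℕ} {φ : Formula}

theorem proves_or_dual (h : IsPrenex b m φ) : Proves (sigLEM m) (φ.or φ.dual) := by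
  cases b; exacts [IsPi.proves_or_dual h, IsSigma.proves_or_dual h]

theorem proves_em (h : IsPrenex b m φ) : Proves (sigLEM m) (φ.or φ.neg) :=
  (Proves.or_imp_or Proves.imp_self Proves.dual_imp_neg).mp h.proves_or_dual

end IsPrenex

section PrenexOperations

open Proves

variable {Γ : Set Formula} {m : ℕ}

/-- One level of prenexation of `op A B`: quantifiers are pulled out of `A` and `B` one at a
time by `hL` and `hR` until both lie in the level below, where `ih` applies. -/
theorem exists_prenex_iff_succ (op : Formula → Formula → Formula) {bA bC : Bool}
    (hL : ∀ A B, IsPrenex bA (m + 1) (A.quant bA) → IsPrenex bC (m + 1) B →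
      Proves Γ ((op (A.quant bA) B).iff ((op A (B.lift 0)).quant bC)))
    (hR : ∀ A B, IsPrenex bA (m + 1) A → IsPrenex bC (m + 1) (B.quant bC) →
      Proves Γ ((op A (B.quant bC)).iff ((op (A.lift 0) B).quant bC)))
    (ih : ∀ A B, IsPrenex (!bA) m A → IsPrenex (!bC) m B →
      ∃ C, IsPrenex (!bC) m C ∧ Proves Γ ((op A B).iff C))
    (A B : Formula) (hA : IsPrenex bA (m + 1) A) (hB : IsPrenex bC (m + 1) B) :
    ∃ C, IsPrenex bC (m + 1) C ∧ Proves Γ ((op A B).iff C) := by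
  rcases hA.succ_cases with hA' | ⟨A₀, hA₀eq, hA₀⟩
  · rcases hB.succ_cases with hB' | ⟨B₀, hB₀eq, hB₀⟩
    · obtain ⟨C, hC, h⟩ := ih A B hA' hB'
      exact ⟨C, hC.succ_of_not, h⟩
    · obtain ⟨C, hC, h⟩ := exists_prenex_iff_succ op hL hR ih (A.lift 0) B₀ (hA.lift 0) hB₀
      subst hB₀eq
      exact ⟨C.quant bC, hC.quant, (hR A B₀ hA hB).iff_trans (quant_congr bC h)⟩
  · obtain ⟨C, hC, h⟩ := exists_prenex_iff_succ op hL hR ih A₀ (B.lift 0) hA₀ (hB.lift 0)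
    subst hA₀eq
    exact ⟨C.quant bC, hC.quant, (hL A₀ B hA hB).iff_trans (quant_congr bC h)⟩
termination_by A.size + B.size
decreasing_by all_goals subst_vars; simp only [Formula.size_lift, Formula.size_quant]; omega

theorem exists_prenex_and_iff : ∀ (m : ℕ) (b : Bool) {A B : Formula},
    IsPrenex b m A → IsPrenex b m B → ∃ C, IsPrenex b m C ∧ Proves ∅ ((A.and B).iff C)
  | 0, _, A, B, hA, hB => ⟨A.and B, .of_isQF ⟨hA.isQF, hB.isQF⟩, iff_refl⟩
  | m + 1, b, A, B, hA, hB =>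
    exists_prenex_iff_succ Formula.and
      (fun _ _ _ _ => by cases b; exacts [all_and_iff, ex_and_iff])
      (fun _ _ _ _ => by cases b; exacts [and_all_iff, and_ex_iff])
      (fun _ _ => exists_prenex_and_iff m (!b)) A B hA hB

theorem exists_prenex_or_iff : ∀ (m : ℕ) (b : Bool) {A B : Formula},
    IsPrenex b m A → IsPrenex b m B → ∃ C, IsPrenex b m C ∧ Proves (sigLEM m) ((A.or B).iff C)
  | 0, _, A, B, hA, hB => ⟨A.or B, .of_isQF ⟨hA.isQF, hB.isQF⟩, iff_refl⟩
  | m + 1, b, A, B, hA, hB =>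
    exists_prenex_iff_succ Formula.or
      (fun _ _ _ hB => by cases b; exacts [all_or_iff hB.proves_em, ex_or_iff])
      (fun _ _ hA _ => by cases b; exacts [or_all_iff hA.proves_em, or_ex_iff])
      (fun _ _ hA hB =>
        have ⟨C, hC, h⟩ := exists_prenex_or_iff m (!b) hA hB
        ⟨C, hC, h.mono (sigLEM_mono (Nat.le_succ m))⟩) A B hA hB

theorem exists_prenex_imp_iff : ∀ (m : ℕ) (b : Bool) {A B : Formula},
    IsPrenex (!b) m A → IsPrenex b m B →
      ∃ C, IsPrenex b m C ∧ Proves (sigLEM m) ((A.imp B).iff C)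
  | 0, _, A, B, hA, hB => ⟨A.imp B, .of_isQF ⟨hA.isQF, hB.isQF⟩, iff_refl⟩
  | m + 1, b, A, B, hA, hB =>
    exists_prenex_iff_succ Formula.imp
      (fun _ _ hA _ => by
        cases b
        · exact ex_imp_iff
        · exact all_imp_iff ((or_imp_or imp_self (ex_imp_ex dual_imp_neg)).mp
            (IsPrenex.proves_or_dual hA)))
      (fun _ _ _ hB => by cases b; exacts [imp_all_iff, imp_ex_iff hB.proves_em])
      (fun _ _ hA hB =>
        have ⟨C, hC, h⟩ := exists_prenex_imp_iff m (!b) hA hB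
        ⟨C, hC, h.mono (sigLEM_mono (Nat.le_succ m))⟩) A B hA hB

end PrenexOperations

/-! ### Alternation paths -/

namespace Formula

/-- `U_m ∪ F_{m-1}` for `b = false` and `E_m ∪ F_{m-1}` for `b = true`: degree at most `m`,
and every path of length `m` begins with `b`. -/
def altBounded (m : ℕ) (b : Bool) (φ : Formula) : Prop :=
  ∀ s ∈ φ.alt, s.length ≤ m ∧ (s.length = m → m = 0 ∨ s.head? = some b)

variable {m : ℕ} {b c : Bool} {A B : Formula}

theorem altBounded_of_inU (h : A.inU m) : A.altBounded m false :=
  fun s hs => ⟨h.1 ▸ Finset.le_sup hs, h.2 s hs⟩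

theorem altBounded_and : (A.and B).altBounded m b ↔ A.altBounded m b ∧ B.altBounded m b :=
  Finset.forall_mem_union

theorem altBounded_or : (A.or B).altBounded m b ↔ A.altBounded m b ∧ B.altBounded m b :=
  Finset.forall_mem_union

theorem altBounded_imp (h : (A.imp B).altBounded m b) :
    A.altBounded m (!b) ∧ B.altBounded m b := by
  refine ⟨fun s hs => ?_, fun s hs => h s (Finset.mem_union_right _ hs)⟩
  have := h (pflip s) (Finset.mem_union_left _ (Finset.mem_image_of_mem _ hs))
  cases s with
  | nil => simpa [pflip] using this
  | cons a s => cases a <;> cases b <;> simpa [pflip] using this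

theorem alt_nonempty : ∀ φ : Formula, φ.alt.Nonempty
  | falsum | dollar | eq _ _ => ⟨[], Finset.mem_singleton_self _⟩
  | and φ _ | or φ _ => (alt_nonempty φ).mono Finset.subset_union_left
  | imp _ ψ => (alt_nonempty ψ).mono Finset.subset_union_right
  | all φ | ex φ => (alt_nonempty φ).image _

theorem alt_quant (c : Bool) (A : Formula) :
    (A.quant c).alt = A.alt.image fun s => if s.head? = some c then s else c :: s := by
  cases c <;> rfl

theorem head_of_mem_alt_quant {s : List Bool} (hs : s ∈ (A.quant c).alt) :
    s.head? = some c := by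
  rw [alt_quant, Finset.mem_image] at hs
  obtain ⟨t, -, rfl⟩ := hs
  split_ifs with ht
  · exact ht
  · rfl

theorem one_le_of_altBounded_quant (h : (A.quant c).altBounded m b) : 1 ≤ m := by
  obtain ⟨s, hs⟩ := alt_nonempty (A.quant c)
  have := head_of_mem_alt_quant hs
  cases s with
  | nil => simp at this
  | cons _ s => have := (h _ hs).1; simp only [List.length_cons] at this; omega

theorem altBounded_of_quant_self (h : (A.quant b).altBounded m b) : A.altBounded m b := by
  intro s hs
  have hmem : (if s.head? = some b then s else b :: s) ∈ (A.quant b).alt := by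
    rw [alt_quant]; exact Finset.mem_image_of_mem _ hs
  split_ifs at hmem with hb
  · exact ⟨(h s hmem).1, fun _ => .inr hb⟩
  · have := (h _ hmem).1
    simp only [List.length_cons] at this
    exact ⟨by omega, fun _ => by omega⟩

/-- Every path of `A.quant c` begins with `c ≠ b`, so none has length `m`. -/
theorem altBounded_pred_of_quant_ne (h : (A.quant c).altBounded m b) (hcb : c ≠ b) :
    (A.quant c).altBounded (m - 1) c := by
  intro s hs
  have hc := head_of_mem_alt_quant hs
  have hlen : s.length ≠ m := fun hl => by
    rcases (h s hs).2 hl with hm | hb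
    · cases s <;> simp_all
    · exact hcb (Option.some.inj (hc.symm.trans hb))
  exact ⟨by have := (h s hs).1; omega, fun _ => .inr hc⟩

end Formula

section PrenexNormalForm

open Proves Formula

variable {m : ℕ} {b : Bool}

theorem exists_prenex_quant_iff {A : Formula} (c : Bool)
    (ihA : ∀ b, A.altBounded m b → ∃ C, IsPrenex b m C ∧ Proves (sigLEM m) (A.iff C))
    (ihm : ∀ m' < m, ∀ b, (A.quant c).altBounded m' b →
      ∃ C, IsPrenex b m' C ∧ Proves (sigLEM m') ((A.quant c).iff C))
    (h : (A.quant c).altBounded m b) :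
    ∃ C, IsPrenex b m C ∧ Proves (sigLEM m) ((A.quant c).iff C) := by
  obtain ⟨m, rfl⟩ := Nat.exists_eq_add_of_le' (one_le_of_altBounded_quant h)
  by_cases hcb : c = b
  · subst hcb
    obtain ⟨C, hC, hAC⟩ := ihA c (altBounded_of_quant_self h)
    exact ⟨C.quant c, hC.quant, quant_congr c hAC⟩
  · obtain ⟨C, hC, hAC⟩ := ihm m m.lt_succ_self c (altBounded_pred_of_quant_ne h hcb)
    obtain rfl := Bool.eq_not_of_ne hcb
    exact ⟨C, hC.succ_of_not, hAC.mono (sigLEM_mono m.le_succ)⟩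

/-- The prenex normal form theorem of Akama–Berardi–Hayashi–Kohlenbach. -/
theorem exists_prenex_iff_of_altBounded (m : ℕ) : ∀ {φ : Formula} (b : Bool),
    φ.noDollar → φ.altBounded m b → ∃ C, IsPrenex b m C ∧ Proves (sigLEM m) (φ.iff C) := by
  induction m using Nat.strong_induction_on with
  | _ m ihm =>
  intro φ
  induction φ with
  | falsum => exact fun _ _ _ => ⟨_, .of_isQF (φ := .falsum) trivial, iff_refl⟩
  | eq t u => exact fun _ _ _ => ⟨_, .of_isQF (φ := .eq t u) trivial, iff_refl⟩
  | dollar => exact fun _ h => h.elim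
  | and A B ihA ihB =>
    intro b hnd h
    obtain ⟨C₁, hC₁, h₁⟩ := ihA b hnd.1 (altBounded_and.1 h).1
    obtain ⟨C₂, hC₂, h₂⟩ := ihB b hnd.2 (altBounded_and.1 h).2
    obtain ⟨C, hC, hC₁₂⟩ := exists_prenex_and_iff m b hC₁ hC₂
    exact ⟨C, hC, (and_congr h₁ h₂).iff_trans (hC₁₂.mono (Set.empty_subset _))⟩
  | or A B ihA ihB =>
    intro b hnd h
    obtain ⟨C₁, hC₁, h₁⟩ := ihA b hnd.1 (altBounded_or.1 h).1
    obtain ⟨C₂, hC₂, h₂⟩ := ihB b hnd.2 (altBounded_or.1 h).2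
    obtain ⟨C, hC, hC₁₂⟩ := exists_prenex_or_iff m b hC₁ hC₂
    exact ⟨C, hC, (or_congr h₁ h₂).iff_trans hC₁₂⟩
  | imp A B ihA ihB =>
    intro b hnd h
    obtain ⟨C₁, hC₁, h₁⟩ := ihA (!b) hnd.1 (altBounded_imp h).1
    obtain ⟨C₂, hC₂, h₂⟩ := ihB b hnd.2 (altBounded_imp h).2
    obtain ⟨C, hC, hC₁₂⟩ := exists_prenex_imp_iff m b hC₁ hC₂
    exact ⟨C, hC, (imp_congr h₁ h₂).iff_trans hC₁₂⟩
  | all A ih =>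
    exact fun b hnd => exists_prenex_quant_iff false (ih · hnd) (fun m' hm' b => ihm m' hm' b hnd)
  | ex A ih =>
    exact fun b hnd => exists_prenex_quant_iff true (ih · hnd) (fun m' hm' b => ihm m' hm' b hnd)

end PrenexNormalForm

section EPi

open Proves

variable {K : ℕ}

theorem EPi.lift {φ : Formula} (h : EPi K φ) (d : ℕ) : EPi K (φ.lift d) := by
  induction h generalizing d with
  | ofPi h => exact .ofPi (h.lift d)
  | or _ _ ih₁ ih₂ => exact .or (ih₁ d) (ih₂ d)
  | all _ ih => exact .all (ih (d + 1))

theorem exists_ePi_and_iff_of_isPi {A B : Formula} (hA : IsPi K A) (hB : EPi K B) :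
    ∃ C, EPi K C ∧ Proves ∅ ((A.and B).iff C) := by
  induction hB generalizing A with
  | ofPi hB =>
    obtain ⟨C, hC, h⟩ := exists_prenex_and_iff K false hA hB
    exact ⟨C, .ofPi hC, h⟩
  | or _ _ ih₁ ih₂ =>
    obtain ⟨C₁, hC₁, h₁⟩ := ih₁ hA
    obtain ⟨C₂, hC₂, h₂⟩ := ih₂ hA
    exact ⟨C₁.or C₂, .or hC₁ hC₂, and_or_iff.iff_trans (or_congr h₁ h₂)⟩
  | all _ ih =>
    obtain ⟨C, hC, h⟩ := ih (hA.lift 0)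
    exact ⟨C.all, .all hC, and_all_iff.iff_trans (all_congr h)⟩

theorem exists_ePi_and_iff {A B : Formula} (hA : EPi K A) (hB : EPi K B) :
    ∃ C, EPi K C ∧ Proves ∅ ((A.and B).iff C) := by
  induction hA generalizing B with
  | ofPi hA => exact exists_ePi_and_iff_of_isPi hA hB
  | or _ _ ih₁ ih₂ =>
    obtain ⟨C₁, hC₁, h₁⟩ := ih₁ hB
    obtain ⟨C₂, hC₂, h₂⟩ := ih₂ hB
    exact ⟨C₁.or C₂, .or hC₁ hC₂, or_and_iff.iff_trans (or_congr h₁ h₂)⟩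
  | all _ ih =>
    obtain ⟨C, hC, h⟩ := ih (hB.lift 0)
    exact ⟨C.all, .all hC, all_and_iff.iff_trans (all_congr h)⟩

end EPi

def HasEPiForm (k : ℕ) (φ : Formula) : Prop :=
  ∃ C, EPi (k + 1) C ∧ Proves (sigLEM k) (C.imp φ) ∧ Proves lemSet (φ.imp C)

namespace HasEPiForm

open Proves

variable {k : ℕ} {φ ψ A B C : Formula}

theorem of_iff (hC : IsPi (k + 1) C) (h : Proves (sigLEM k) (φ.iff C)) : HasEPiForm k φ :=
  ⟨C, .ofPi hC, h.iff_mpr, h.iff_mp.mono (sigLEM_subset_lemSet k)⟩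

theorem of_isQF (h : φ.isQF) : HasEPiForm k φ :=
  of_iff (IsPrenex.of_isQF (b := false) h) iff_refl

theorem of_imp (h : HasEPiForm k ψ) (hψφ : Proves (sigLEM k) (ψ.imp φ))
    (hφψ : Proves lemSet (φ.imp ψ)) : HasEPiForm k φ :=
  have ⟨C, hC, hCψ, hψC⟩ := h
  ⟨C, hC, imp_trans hCψ hψφ, imp_trans hφψ hψC⟩

theorem or (hA : HasEPiForm k A) (hB : HasEPiForm k B) : HasEPiForm k (A.or B) :=
  have ⟨CA, hCA, hCA₁, hCA₂⟩ := hA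
  have ⟨CB, hCB, hCB₁, hCB₂⟩ := hB
  ⟨CA.or CB, .or hCA hCB, or_imp_or hCA₁ hCB₁, or_imp_or hCA₂ hCB₂⟩

theorem and (hA : HasEPiForm k A) (hB : HasEPiForm k B) : HasEPiForm k (A.and B) :=
  have ⟨_, hCA, hCA₁, hCA₂⟩ := hA
  have ⟨_, hCB, hCB₁, hCB₂⟩ := hB
  have ⟨C, hC, h⟩ := exists_ePi_and_iff hCA hCB
  ⟨C, hC, imp_trans (h.iff_mpr.mono (Set.empty_subset _)) (and_imp_and hCA₁ hCB₁),
    imp_trans (and_imp_and hCA₂ hCB₂) (h.iff_mp.mono (Set.empty_subset _))⟩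

theorem all (h : HasEPiForm k A) : HasEPiForm k A.all :=
  have ⟨C, hC, hC₁, hC₂⟩ := h
  ⟨C.all, .all hC, all_imp_all hC₁, all_imp_all hC₂⟩

theorem neg_or (hA : HasEPiForm k A.neg) (hB : HasEPiForm k B.neg) :
    HasEPiForm k (A.or B).neg :=
  (hA.and hB).of_imp neg_or_iff.iff_mpr neg_or_iff.iff_mp

theorem neg_ex (h : HasEPiForm k A.neg) : HasEPiForm k A.ex.neg :=
  h.all.of_imp neg_ex_iff.iff_mpr neg_ex_iff.iff_mp

theorem imp (hA : A.noDollar) (hnA : HasEPiForm k A.neg) (hB : HasEPiForm k B) :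
    HasEPiForm k (A.imp B) :=
  (hnA.or hB).of_imp (or_imp neg_imp_imp imp_const)
    (imp_of_em (ax ⟨A, hA, rfl⟩) (imp_trans (imp_swap imp_self) (imp_imp_imp_right or_inr))
      (imp_trans or_inl imp_const))

theorem neg_and (hA : A.noDollar) (hnA : HasEPiForm k A.neg) (hnB : HasEPiForm k B.neg) :
    HasEPiForm k (A.and B).neg :=
  (hnA.or hnB).of_imp (or_imp (mt and_left) (mt and_right))
    (imp_of_em (ax ⟨A, hA, rfl⟩) (imp_trans (ha (.andI A B)) (imp_trans imp_comp
      (imp_imp_imp_right or_inr))) (imp_trans or_inl imp_const))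

theorem neg_imp (hA : A.noDollar) (hA' : HasEPiForm k A) (hnB : HasEPiForm k B.neg) :
    HasEPiForm k (A.imp B).neg :=
  (hA'.and hnB).of_imp and_neg_imp_neg_imp
    (imp_and (imp_of_em (ax ⟨A, hA, rfl⟩) imp_const (imp_trans neg_imp_imp
      (imp_trans (imp_swap imp_self) (imp_imp_imp_right falsum_imp)))) (mt imp_const))

theorem neg_of_iff_isPi (hC : IsPi k C) (h : Proves (sigLEM k) (φ.iff C)) :
    HasEPiForm k φ.neg :=
  of_iff (.ofSigma hC.dual)
    ((neg_congr h).iff_trans (iff_intro hC.proves_or_dual.resolve_left dual_imp_neg))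

end HasEPiForm

open Formula in
theorem hasEPiForm_of_altBounded (k : ℕ) : ∀ {φ : Formula}, φ.noDollar →
    (φ.altBounded (k + 1) false → HasEPiForm k φ) ∧
      (φ.altBounded (k + 1) true → HasEPiForm k φ.neg)
  | .falsum, _ => ⟨fun _ => .of_isQF trivial, fun _ => .of_isQF ⟨trivial, trivial⟩⟩
  | .eq _ _, _ => ⟨fun _ => .of_isQF trivial, fun _ => .of_isQF ⟨trivial, trivial⟩⟩
  | .and _ _, h =>
    ⟨fun hb => ((hasEPiForm_of_altBounded k h.1).1 (altBounded_and.1 hb).1).and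
        ((hasEPiForm_of_altBounded k h.2).1 (altBounded_and.1 hb).2),
      fun hb => .neg_and h.1 ((hasEPiForm_of_altBounded k h.1).2 (altBounded_and.1 hb).1)
        ((hasEPiForm_of_altBounded k h.2).2 (altBounded_and.1 hb).2)⟩
  | .or _ _, h =>
    ⟨fun hb => ((hasEPiForm_of_altBounded k h.1).1 (altBounded_or.1 hb).1).or
        ((hasEPiForm_of_altBounded k h.2).1 (altBounded_or.1 hb).2),
      fun hb => .neg_or ((hasEPiForm_of_altBounded k h.1).2 (altBounded_or.1 hb).1)
        ((hasEPiForm_of_altBounded k h.2).2 (altBounded_or.1 hb).2)⟩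
  | .imp _ _, h =>
    ⟨fun hb => .imp h.1 ((hasEPiForm_of_altBounded k h.1).2 (altBounded_imp hb).1)
        ((hasEPiForm_of_altBounded k h.2).1 (altBounded_imp hb).2),
      fun hb => .neg_imp h.1 ((hasEPiForm_of_altBounded k h.1).1 (altBounded_imp hb).1)
        ((hasEPiForm_of_altBounded k h.2).2 (altBounded_imp hb).2)⟩
  | .all A, h =>
    ⟨fun hb => ((hasEPiForm_of_altBounded k (φ := A) h).1
        (altBounded_of_quant_self (b := false) hb)).all,
      fun hb =>
        have ⟨C, hC, hAC⟩ := exists_prenex_iff_of_altBounded k false h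
          (altBounded_pred_of_quant_ne (c := false) hb (by decide))
        .neg_of_iff_isPi hC hAC⟩
  | .ex A, h =>
    ⟨fun hb =>
        have ⟨C, hC, hAC⟩ := exists_prenex_iff_of_altBounded k true h
          (altBounded_pred_of_quant_ne (c := true) hb (by decide))
        .of_iff (.ofSigma hC) hAC,
      fun hb => ((hasEPiForm_of_altBounded k (φ := A) h).2
        (altBounded_of_quant_self (b := true) hb)).neg_ex⟩

theorem proves_sigLEM_of_ePi_conservative {k : ℕ} {S T : Set Formula} (hS : lemSet ⊆ S)
    (hcons : ∀ φ : Formula, EPi (k + 1) φ → Proves S φ → Proves T φ) :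
    ∀ ψ ∈ sigLEM k, Proves T ψ := by
  rintro _ ⟨φ, hφ, rfl⟩
  have hT : Proves T (φ.or φ.dual) :=
    hcons _ (.or (.ofPi (.ofSigma hφ)) (.ofPi hφ.dual.succ))
      (hφ.proves_or_dual.mono ((sigLEM_subset_lemSet k).trans hS))
  exact (Proves.or_imp_or Proves.imp_self Proves.dual_imp_neg).mp hT

/-- if `PA + X` is `EΠ_{k+1}`-conservative over `T + X`,
then it is `U_{k+1}`-conservative over `T + X`. -/
theorem u_conservative_of_ePi_conservative (k : ℕ) (T X : Set Formula)
    (hX : ∀ ψ ∈ X, ψ.noDollar ∧ ψ.sentence)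
    (hcons : ∀ φ : Formula, EPi (k + 1) φ →
      Proves (lemSet ∪ X) φ → Proves (T ∪ X) φ) :
    ∀ φ : Formula, φ.noDollar → φ.inU (k + 1) →
      Proves (lemSet ∪ X) φ → Proves (T ∪ X) φ := by
  intro φ hφ hU hPA
  obtain ⟨C, hC, hCφ, hφC⟩ := (hasEPiForm_of_altBounded k hφ).1 (Formula.altBounded_of_inU hU)
  have hTC : Proves (T ∪ X) C := hcons C hC ((hφC.mono Set.subset_union_left).mp hPA)
  exact (hCφ.transfer (proves_sigLEM_of_ePi_conservative Set.subset_union_left hcons)).mp hTC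

end SemiClassicalArith
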